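/- arXiv:math/0412003 — 3 statements merged into one kernel-verified Lean document; each statement's English description precedes it below -/
import Mathlib

section
/- Let f be an integrable probability density on ℝ satisfying Poisson summation, with ∑_{k≠0}|f̂(Tk)/k| → 0 as T → ∞. Then for any [a,b] ⊆ [0,1], ∑_{k∈ℤ}(1/T)∫_a^b f((x+k)/T)dx = (b−a) + ∑_{k≠0} f̂(Tk)·(e^{2πibk}−e^{2πiak})/(2πik), which tends to b−a as T → ∞. -/
open MeasureTheory Real Filter

/-- The Fourier transform `f̂(y) = ∫ f(x) e^{-2πixy} dx`. -/
noncomputable def fourierTransform (f : ℝ → ℝ) (y : ℝ) : ℂ :=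
  ∫ x : ℝ, (f x : ℂ) * Complex.exp (-(2 * π * x * y) * Complex.I)

/-!
Integrate the Poisson identity over `[a, b]` term by term. The periodization
`x ↦ ∑ₖ f((x + k)/T)` has mass `T` on `(0, 1]`, because its translates tile `x ↦ f(x/T)`; this
justifies exchanging sum and integral on the left. The coefficients `f̂(Tk)` are summable, since
otherwise the Fourier series would have the junk value `0` at every `x`, whereas the periodization
of a density is not identically zero. The `k = 0` term contributes `f̂(0)(b - a) = b - a`, and the
`k`-th term has size at most `|f̂(Tk)/k|/π`.
-/

open Set
open scoped ENNReal

theorem tsum_setLIntegral_Ioc_comp_add_intCast (g : ℝ → ℝ≥0∞) (t : ℝ) :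
    ∑' k : ℤ, ∫⁻ x in Ioc t (t + 1), g (x + k) = ∫⁻ x, g x := by
  have hshift (k : ℤ) :
      ∫⁻ x in Ioc t (t + 1), g (x + k) = ∫⁻ x in Ioc (t + k) (t + k + 1), g x := by
    rw [(measurePreserving_add_right volume (k : ℝ)).setLIntegral_comp_emb
      (measurableEmbedding_addRight _) g, image_add_const_Ioc, add_right_comm]
  simp_rw [hshift]
  rw [← lintegral_iUnion (fun _ => measurableSet_Ioc) (pairwise_disjoint_Ioc_add_intCast t),
    iUnion_Ioc_add_intCast, Measure.restrict_univ]

theorem lintegral_comp_div_const (g : ℝ → ℝ≥0∞) {T : ℝ} (hT : T ≠ 0) :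
    ∫⁻ x, g (x / T) = ENNReal.ofReal |T| * ∫⁻ x, g x := by
  have hemb : MeasurableEmbedding (fun x : ℝ => T⁻¹ * x) :=
    (Homeomorph.mulLeft₀ T⁻¹ (inv_ne_zero hT)).measurableEmbedding
  simp_rw [div_eq_inv_mul]
  rw [← hemb.lintegral_map, Real.map_volume_mul_left (inv_ne_zero hT), inv_inv,
    lintegral_smul_measure, smul_eq_mul]

theorem tsum_setLIntegral_Ioc_comp_add_intCast_div (g : ℝ → ℝ≥0∞) {T : ℝ} (hT : 0 < T) :
    ∑' k : ℤ, ∫⁻ x in Ioc 0 1, g ((x + k) / T) = ENNReal.ofReal T * ∫⁻ x, g x := by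
  simpa [abs_of_pos hT] using (tsum_setLIntegral_Ioc_comp_add_intCast (fun y => g (y / T)) 0).trans
    (lintegral_comp_div_const g hT.ne')

section Periodization

variable {E : Type*} [NormedAddCommGroup E] {f : ℝ → E} {T : ℝ}

theorem MeasureTheory.Integrable.comp_add_intCast_div (hf : Integrable f) (hT : T ≠ 0) (k : ℤ) :
    Integrable (fun x => f ((x + k) / T)) :=
  (hf.comp_div hT).comp_add_right (k : ℝ)

theorem tsum_setLIntegral_enorm_comp_add_intCast_div_ne_top (hf : Integrable f) (hT : 0 < T) :
    ∑' k : ℤ, ∫⁻ x in Ioc 0 1, ‖f ((x + k) / T)‖ₑ ≠ ∞ := by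
  rw [tsum_setLIntegral_Ioc_comp_add_intCast_div (‖f ·‖ₑ) hT]
  exact ENNReal.mul_ne_top ENNReal.ofReal_ne_top hf.hasFiniteIntegral.ne

theorem ae_summable_comp_add_intCast_div [CompleteSpace E] (hf : Integrable f) (hT : 0 < T) :
    ∀ᵐ x ∂volume.restrict (Ioc 0 1), Summable fun k : ℤ => f ((x + k) / T) := by
  have hmeas (k : ℤ) : AEMeasurable (fun x => ‖f ((x + k) / T)‖ₑ) (volume.restrict (Ioc 0 1)) :=
    (hf.comp_add_intCast_div hT.ne' k).restrict.aestronglyMeasurable.enorm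
  have hfin : ∫⁻ x in Ioc 0 1, ∑' k : ℤ, ‖f ((x + k) / T)‖ₑ ≠ ∞ := by
    rw [lintegral_tsum hmeas]
    exact tsum_setLIntegral_enorm_comp_add_intCast_div_ne_top hf hT
  filter_upwards [ae_lt_top' (AEMeasurable.tsum hmeas) hfin] with x hx
  exact (tsum_enorm_ne_top_iff_summable_norm.1 hx.ne).of_norm

theorem integral_tsum_comp_add_intCast_div [NormedSpace ℝ E] (hf : Integrable f) (hT : 0 < T)
    {s : Set ℝ} (hs : s ⊆ Ioc 0 1) :
    ∫ x in s, ∑' k : ℤ, f ((x + k) / T) = ∑' k : ℤ, ∫ x in s, f ((x + k) / T) := by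
  refine integral_tsum (fun k => (hf.comp_add_intCast_div hT.ne' k).restrict.aestronglyMeasurable)
    (ne_top_of_le_ne_top (tsum_setLIntegral_enorm_comp_add_intCast_div_ne_top hf hT) ?_)
  exact ENNReal.tsum_le_tsum fun k => lintegral_mono_set hs

end Periodization

theorem exists_tsum_comp_add_intCast_div_ne_zero {f : ℝ → ℝ} (hf : Integrable f)
    (hpos : ∀ x, 0 ≤ f x) (hf0 : ∫ x, f x ≠ 0) {T : ℝ} (hT : 0 < T) :
    ∃ x : ℝ, ∑' k : ℤ, f ((x + k) / T) ≠ 0 := by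
  by_contra! hzero
  have hterm (k : ℤ) : ∫⁻ x in Ioc 0 1, ‖f ((x + k) / T)‖ₑ = 0 := by
    refine (lintegral_congr_ae ?_).trans lintegral_zero
    filter_upwards [ae_summable_comp_add_intCast_div hf hT] with x hx
    have := (hasSum_zero_iff_of_nonneg fun k => hpos _).1 (hzero x ▸ hx.hasSum)
    simp [congrFun this k]
  have hmass := tsum_setLIntegral_Ioc_comp_add_intCast_div (‖f ·‖ₑ) hT
  simp only [hterm, tsum_zero, zero_eq_mul, ENNReal.ofReal_eq_zero, not_le.2 hT, false_or] at hmass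
  exact hf0 (enorm_eq_zero.1 (le_antisymm (hmass ▸ enorm_integral_le_lintegral_enorm f) bot_le))

theorem norm_exp_two_pi_I_mul_intCast (x : ℝ) (k : ℤ) :
    ‖Complex.exp (2 * π * Complex.I * x * k)‖ = 1 := by
  rw [show 2 * π * Complex.I * x * k = ((2 * π * x * k : ℝ) : ℂ) * Complex.I by push_cast; ring,
    Complex.norm_exp_ofReal_mul_I]

theorem summable_of_tsum_mul_exp_ne_zero {c : ℤ → ℂ} {x : ℝ}
    (h : ∑' k : ℤ, c k * Complex.exp (2 * π * Complex.I * x * k) ≠ 0) : Summable c := by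
  have hsum := summable_norm_iff.2 (by_contra fun hns => h (tsum_eq_zero_of_not_summable hns))
  simp only [norm_mul, norm_exp_two_pi_I_mul_intCast, mul_one] at hsum
  exact hsum.of_norm

theorem hasSum_mul_integral_exp {μ : Measure ℝ} [IsFiniteMeasure μ] {c : ℤ → ℂ}
    (hc : Summable c) :
    HasSum (fun k : ℤ => c k * ∫ x, Complex.exp (2 * π * Complex.I * x * k) ∂μ)
      (∫ x, ∑' k : ℤ, c k * Complex.exp (2 * π * Complex.I * x * k) ∂μ) := by
  have hnorm (k : ℤ) (x : ℝ) : ‖c k * Complex.exp (2 * π * Complex.I * x * k)‖ = ‖c k‖ := by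
    rw [norm_mul, norm_exp_two_pi_I_mul_intCast, mul_one]
  have hint (k : ℤ) : Integrable (fun x : ℝ => c k * Complex.exp (2 * π * Complex.I * x * k)) μ :=
    (integrable_const ‖c k‖).mono' (by fun_prop) (ae_of_all _ fun x => (hnorm k x).le)
  simp_rw [← integral_const_mul]
  refine hasSum_integral_of_summable_integral_norm hint ?_
  simpa only [hnorm, integral_const, smul_eq_mul] using hc.norm.mul_left (μ.real Set.univ)

theorem integral_exp_two_pi_I_mul_intCast (a b : ℝ) {k : ℤ} (hk : k ≠ 0) :
    ∫ x in a..b, Complex.exp (2 * π * Complex.I * x * k) =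
      (Complex.exp (2 * π * Complex.I * b * k) - Complex.exp (2 * π * Complex.I * a * k)) /
        (2 * π * Complex.I * k) := by
  have hc : 2 * π * Complex.I * k ≠ 0 := by simp [hk, pi_ne_zero]
  simp_rw [mul_right_comm (2 * π * Complex.I : ℂ) _ (k : ℂ)]
  exact integral_exp_mul_complex hc

theorem Summable.tsum_eq_add_tsum_ne {β E : Type*} [NormedAddCommGroup E] [CompleteSpace E]
    {g : β → E} (hg : Summable g) (b : β) : ∑' x, g x = g b + ∑' x : {x // x ≠ b}, g x := by
  rw [← hg.tsum_subtype_add_tsum_subtype_compl {b}, tsum_singleton]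
  rfl

theorem norm_mul_exp_sub_exp_div_le (c : ℂ) (a b : ℝ) (k : ℤ) :
    ‖c * (Complex.exp (2 * π * Complex.I * b * k) - Complex.exp (2 * π * Complex.I * a * k)) /
        (2 * π * Complex.I * k)‖ ≤ 1 / π * ‖c / k‖ := by
  have hexp : ‖Complex.exp (2 * π * Complex.I * b * k) - Complex.exp (2 * π * Complex.I * a * k)‖
      ≤ 2 := by
    refine (norm_sub_le _ _).trans ?_
    rw [norm_exp_two_pi_I_mul_intCast, norm_exp_two_pi_I_mul_intCast]
    norm_num
  have hden : ‖2 * π * Complex.I * k‖ = 2 * π * ‖(k : ℂ)‖ := by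
    simp [abs_of_pos pi_pos]
  calc _ ≤ ‖c‖ * 2 / (2 * π * ‖(k : ℂ)‖) := by
        rw [norm_div, norm_mul, hden]
        gcongr
    _ = 1 / π * ‖c / k‖ := by
        rw [norm_div]
        field_simp

theorem one_le_norm_intCast_of_ne_zero {k : ℤ} (hk : k ≠ 0) : 1 ≤ ‖(k : ℂ)‖ := by
  rw [Complex.norm_intCast]
  exact_mod_cast Int.one_le_abs hk

theorem norm_tsum_mul_exp_sub_exp_div_le {c : ℤ → ℂ} (hc : Summable c) (a b : ℝ) :
    ‖∑' k : {k : ℤ // k ≠ 0}, c k *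
        (Complex.exp (2 * π * Complex.I * b * (k : ℤ)) -
          Complex.exp (2 * π * Complex.I * a * (k : ℤ))) / (2 * π * Complex.I * (k : ℤ))‖ ≤
      1 / π * ∑' k : {k : ℤ // k ≠ 0}, ‖c k / (k : ℤ)‖ := by
  have hsum : Summable fun k : {k : ℤ // k ≠ 0} => ‖c k / (k : ℤ)‖ := by
    refine (hc.norm.subtype _).of_nonneg_of_le (fun _ => norm_nonneg _) fun k => ?_
    rw [norm_div]
    exact div_le_self (norm_nonneg _) (one_le_norm_intCast_of_ne_zero k.2)
  exact tsum_of_norm_bounded (hsum.hasSum.mul_left (1 / π))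
    fun k => norm_mul_exp_sub_exp_div_le (c k) a b k

theorem tsum_intervalIntegral_comp_add_intCast_div_eq {f : ℝ → ℝ} (hf : Integrable f) {T : ℝ}
    (hT : 0 < T) {c : ℤ → ℂ} (hc : Summable c)
    (hexpansion : ∀ x : ℝ, ∑' k : ℤ, (f ((x + k) / T) : ℂ) =
      T * ∑' k : ℤ, c k * Complex.exp (2 * π * Complex.I * x * k))
    {a b : ℝ} (ha : 0 ≤ a) (hab : a ≤ b) (hb : b ≤ 1) :
    ∑' k : ℤ, (((1 / T) * ∫ x in a..b, f ((x + k) / T) : ℝ) : ℂ) =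
      c 0 * (b - a) + ∑' k : {k : ℤ // k ≠ 0}, c k *
        (Complex.exp (2 * π * Complex.I * b * (k : ℤ)) -
          Complex.exp (2 * π * Complex.I * a * (k : ℤ))) / (2 * π * Complex.I * (k : ℤ)) := by
  have hsum := hasSum_mul_integral_exp (μ := volume.restrict (Ioc a b)) hc
  simp_rw [← intervalIntegral.integral_of_le hab] at hsum
  calc ∑' k : ℤ, (((1 / T) * ∫ x in a..b, f ((x + k) / T) : ℝ) : ℂ)
      = (1 / T : ℂ) * ∫ x in a..b, ((∑' k : ℤ, f ((x + k) / T) : ℝ) : ℂ) := by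
        rw [← Complex.ofReal_tsum, tsum_mul_left, intervalIntegral.integral_ofReal]
        simp_rw [intervalIntegral.integral_of_le hab]
        rw [integral_tsum_comp_add_intCast_div hf hT (Ioc_subset_Ioc ha hb)]
        push_cast
        rfl
    _ = ∑' k : ℤ, c k * ∫ x in a..b, Complex.exp (2 * π * Complex.I * x * k) := by
        simp_rw [Complex.ofReal_tsum, hexpansion, intervalIntegral.integral_const_mul, hsum.tsum_eq]
        rw [one_div, inv_mul_cancel_left₀ (Complex.ofReal_ne_zero.2 hT.ne')]
    _ = _ := by
        rw [hsum.summable.tsum_eq_add_tsum_ne 0]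
        congr 1
        · simp
        · refine tsum_congr fun k => ?_
          rw [integral_exp_two_pi_I_mul_intCast a b k.2, mul_div_assoc]

theorem fourierTransform_zero (f : ℝ → ℝ) : fourierTransform f 0 = ∫ x, f x := by
  simp [fourierTransform, integral_complex_ofReal]

theorem summable_fourierTransform_mul_intCast {f : ℝ → ℝ} (hf : Integrable f)
    (hpos : ∀ x, 0 ≤ f x) (hf0 : ∫ x, f x ≠ 0) {T : ℝ} (hT : 0 < T)
    (hPoisson : ∀ x : ℝ, ∑' k : ℤ, (f ((x + k) / T) : ℂ) =
      T * ∑' k : ℤ, fourierTransform f (T * k) * Complex.exp (2 * π * Complex.I * x * k)) :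
    Summable fun k : ℤ => fourierTransform f (T * k) := by
  obtain ⟨x, hx⟩ := exists_tsum_comp_add_intCast_div_ne_zero hf hpos hf0 hT
  refine summable_of_tsum_mul_exp_ne_zero (x := x) fun h => hx ?_
  have hzero : ((∑' k : ℤ, f ((x + k) / T) : ℝ) : ℂ) = 0 := by
    rw [Complex.ofReal_tsum, hPoisson x, h, mul_zero]
  exact_mod_cast hzero

/-- For an integrable probability density `f` satisfying Poisson summation for its
translates and dilates, with `∑_{k ≠ 0} |f̂(Tk)/k| → 0` as `T → ∞`: for any
`[a,b] ⊆ [0,1]`, we have for each `T > 0`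
`∑_{k ∈ ℤ} (1/T) ∫_a^b f((x+k)/T) dx
  = (b-a) + ∑_{k ≠ 0} f̂(Tk) (e^{2πibk} - e^{2πiak})/(2πik)`,
and the left side tends to `b - a` as `T → ∞`. -/
theorem poisson_main_term (f : ℝ → ℝ) (hint : Integrable f)
    (hpos : ∀ x, 0 ≤ f x) (hprob : ∫ x, f x = 1)
    (hPoisson : ∀ T : ℝ, 0 < T → ∀ x : ℝ,
      ∑' k : ℤ, ((f ((x + k) / T) : ℂ)) =
        T * ∑' k : ℤ, fourierTransform f (T * k) * Complex.exp (2 * π * Complex.I * x * k))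
    (hdecay : Filter.Tendsto
      (fun T : ℝ => ∑' k : {k : ℤ // k ≠ 0}, ‖fourierTransform f (T * (k : ℤ)) / ((k : ℤ) : ℂ)‖)
      Filter.atTop (nhds 0))
    (a b : ℝ) (ha : 0 ≤ a) (hab : a ≤ b) (hb : b ≤ 1) :
    (∀ T : ℝ, 0 < T →
      ∑' k : ℤ, (((1 / T) * ∫ x in a..b, f ((x + k) / T) : ℝ) : ℂ) =
        (b - a : ℂ) + ∑' k : {k : ℤ // k ≠ 0},
          fourierTransform f (T * (k : ℤ)) *
            (Complex.exp (2 * π * Complex.I * b * (k : ℤ)) -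
              Complex.exp (2 * π * Complex.I * a * (k : ℤ))) /
            (2 * π * Complex.I * (k : ℤ))) ∧
    Filter.Tendsto
      (fun T : ℝ => ∑' k : ℤ, (1 / T) * ∫ x in a..b, f ((x + k) / T))
      Filter.atTop (nhds (b - a)) := by
  have hsum (T : ℝ) (hT : 0 < T) : Summable fun k : ℤ => fourierTransform f (T * k) :=
    summable_fourierTransform_mul_intCast hint hpos (by simp [hprob]) hT (hPoisson T hT)
  have hident (T : ℝ) (hT : 0 < T) := by
    have h := tsum_intervalIntegral_comp_add_intCast_div_eq hint hT (hsum T hT) (hPoisson T hT)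
      ha hab hb
    rwa [Int.cast_zero, mul_zero, fourierTransform_zero, hprob, Complex.ofReal_one, one_mul] at h
  refine ⟨hident, ?_⟩
  rw [tendsto_iff_norm_sub_tendsto_zero]
  refine squeeze_zero' (Eventually.of_forall fun T => norm_nonneg _) ?_
    (by simpa only [mul_zero] using hdecay.const_mul (1 / π))
  filter_upwards [eventually_gt_atTop 0] with T hT
  rw [← Complex.norm_real, Complex.ofReal_sub, Complex.ofReal_tsum, hident T hT]
  push_cast
  rw [add_sub_cancel_left]
  exact norm_tsum_mul_exp_sub_exp_div_le (hsum T hT) a b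
end

section
/- If X is a Gaussian random variable with mean μ and variance σ², then for every [a,b] ⊆ [0,1], |P(X mod 1 ∈ [a,b]) − (b−a)| ≤ ∑_{k≠0} e^{−2π²σ²k²}·|e^{2πibk}−e^{2πiak}|/(2π|k|); in particular P(X mod 1 ∈ [a,b]) → b−a as σ → ∞ uniformly in μ. -/
/-!
By Poisson summation, the density of `X mod 1`, i.e. the periodization `∑ₙ p(y + n)` of the
Gaussian density `p`, is the Fourier series `∑ₖ e^{-2π²σ²k²} e^{2πik(y - m)}`, whose coefficients
are absolutely summable. Integrating it termwise over `[a, b]`, the term `k = 0` gives `b - a`, and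
the `k`-th term has modulus `e^{-2π²σ²k²} |e^{2πibk} - e^{2πiak}| / (2π|k|)`. The series of these
moduli does not involve `m`, and it tends to `0` as `σ → ∞` by dominated convergence.
-/

open MeasureTheory ProbabilityTheory Real
open Set Filter Topology
open Complex (I)
open scoped NNReal ENNReal Complex

lemma withDensity_Ioc_add (f : ℝ → ℝ≥0∞) (hf : Measurable f) (c a b : ℝ) :
    volume.withDensity f (Ioc (c + a) (c + b)) = ∫⁻ y in Ioc a b, f (y + c) := by
  rw [withDensity_apply f measurableSet_Ioc,
    ← (measurePreserving_add_right volume c).setLIntegral_comp_preimage measurableSet_Ioc hf,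
    preimage_add_const_Ioc, add_sub_cancel_left, add_sub_cancel_left]

section FractPreimage

variable {a b : ℝ}

lemma Int.floor_eq_of_mem_Ico_intCast_add (ha : 0 ≤ a) (hb : b ≤ 1) {n : ℤ} {x : ℝ}
    (hx : x ∈ Ico (n + a) (n + b)) : ⌊x⌋ = n :=
  Int.floor_eq_iff.2 ⟨by linarith [hx.1], by linarith [hx.2]⟩

lemma measure_setOf_fract_mem_Icc (μ : Measure ℝ) [NullSingletonClass μ] (ha : 0 ≤ a)
    (hb : b ≤ 1) :
    μ {x | Int.fract x ∈ Icc a b} = ∑' n : ℤ, μ (Ioc (n + a) (n + b)) := by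
  have hsub : ⋃ n : ℤ, Ico (n + a) (n + b) ⊆ {x | Int.fract x ∈ Icc a b} := by
    refine iUnion_subset fun n x hx => ?_
    rw [mem_ofPred_eq, Int.fract, Int.floor_eq_of_mem_Ico_intCast_add ha hb hx]
    exact ⟨by linarith [hx.1], by linarith [hx.2]⟩
  have hdiff : {x | Int.fract x ∈ Icc a b} \ ⋃ n : ℤ, Ico (n + a) (n + b) ⊆
      range fun n : ℤ => n + b := by
    rintro x ⟨⟨hax, hxb⟩, hx⟩
    have hfract : Int.fract x = b := hxb.antisymm <| not_lt.1 fun hlt =>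
      hx <| mem_iUnion.2 ⟨⌊x⌋, by rw [Int.fract] at hax hlt; exact ⟨by linarith, by linarith⟩⟩
    exact ⟨⌊x⌋, by simp only [← hfract, Int.floor_add_fract]⟩
  have hdisj : Pairwise (Function.onFun Disjoint fun n : ℤ => Ico ((n : ℝ) + a) (n + b)) :=
    fun i j hij => disjoint_left.2 fun x hi hj =>
      hij ((Int.floor_eq_of_mem_Ico_intCast_add ha hb hi).symm.trans
        (Int.floor_eq_of_mem_Ico_intCast_add ha hb hj))
  calc μ {x | Int.fract x ∈ Icc a b} = μ (⋃ n : ℤ, Ico (n + a) (n + b)) :=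
        (measure_eq_measure_of_null_sdiff hsub
          (measure_mono_null hdiff ((countable_range _).measure_zero μ))).symm
    _ = ∑' n : ℤ, μ (Ico (n + a) (n + b)) := measure_iUnion hdisj fun _ => measurableSet_Ico
    _ = ∑' n : ℤ, μ (Ioc (n + a) (n + b)) := tsum_congr fun _ => measure_congr Ico_ae_eq_Ioc

lemma withDensity_setOf_fract_mem_Icc {f : ℝ → ℝ≥0∞} (hf : Measurable f) (ha : 0 ≤ a)
    (hb : b ≤ 1) :
    volume.withDensity f {x | Int.fract x ∈ Icc a b} = ∫⁻ y in Ioc a b, ∑' n : ℤ, f (y + n) := by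
  rw [measure_setOf_fract_mem_Icc _ ha hb, lintegral_tsum (f := fun (n : ℤ) y => f (y + n))
    fun n => (hf.comp (measurable_add_const _)).aemeasurable]
  exact tsum_congr fun n => withDensity_Ioc_add f hf n a b

end FractPreimage

lemma summable_exp_neg_mul_add_sq {α : ℝ} (hα : 0 < α) (t : ℝ) :
    Summable fun n : ℤ => rexp (-α * (n + t) ^ 2) := by
  refine (HurwitzKernelBounds.summable_f_int 0 t (div_pos hα pi_pos)).congr fun n => ?_
  rw [HurwitzKernelBounds.f_int, pow_zero, one_mul]
  field_simp

lemma summable_gaussianPDFReal_add_intCast (m : ℝ) {v : ℝ≥0} (hv : v ≠ 0) (y : ℝ) :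
    Summable fun n : ℤ => gaussianPDFReal m v (y + n) := by
  have hv' : (0 : ℝ) < v := by positivity
  refine ((summable_exp_neg_mul_add_sq (inv_pos.2 (mul_pos two_pos hv')) (y - m)).mul_left
    (√(2 * π * v))⁻¹).congr fun n => ?_
  rw [gaussianPDFReal]
  congr 2
  field_simp
  ring

lemma tsum_gaussianPDFReal_add_intCast (m : ℝ) {v : ℝ≥0} (hv : v ≠ 0) (y : ℝ) :
    ((∑' n : ℤ, gaussianPDFReal m v (y + n) : ℝ) : ℂ) =
      ∑' k : ℤ, (rexp (-2 * π ^ 2 * v * k ^ 2) : ℂ) * cexp (2 * π * I * k * (y - m)) := by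
  have hv' : (0 : ℝ) < v := by positivity
  have h2πv : (0 : ℝ) < 2 * π * v := by positivity
  have hpoisson := Complex.tsum_exp_neg_quadratic (a := ((2 * π * v : ℝ) : ℂ))
    (by simpa using h2πv) (I * (y - m))
  have hsqrt : (1 : ℂ) / ((2 * π * v : ℝ) : ℂ) ^ (1 / 2 : ℂ) = ((√(2 * π * v))⁻¹ : ℝ) := by
    rw [sqrt_eq_rpow, Complex.ofReal_inv, Complex.ofReal_cpow h2πv.le, one_div]
    norm_num
  calc ((∑' n : ℤ, gaussianPDFReal m v (y + n) : ℝ) : ℂ)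
      = ∑' n : ℤ, (gaussianPDFReal m v (y - n) : ℂ) := by
        rw [Complex.ofReal_tsum, ← (Equiv.neg ℤ).tsum_eq]
        simp [sub_eq_add_neg]
    _ = ∑' n : ℤ, 1 / ((2 * π * v : ℝ) : ℂ) ^ (1 / 2 : ℂ) *
          cexp (-π / ((2 * π * v : ℝ) : ℂ) * (n + I * (I * (y - m))) ^ 2) := by
        refine tsum_congr fun n => ?_
        rw [hsqrt, gaussianPDFReal, Complex.ofReal_mul, Complex.ofReal_exp, ← mul_assoc I,
          Complex.I_mul_I]
        congr 2
        push_cast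
        field_simp
        ring
    _ = ∑' k : ℤ, cexp (-π * ((2 * π * v : ℝ) : ℂ) * k ^ 2 + 2 * π * (I * (y - m)) * k) := by
        rw [hpoisson, tsum_mul_left]
    _ = _ := by
        refine tsum_congr fun k => ?_
        rw [Complex.ofReal_exp, ← Complex.exp_add]
        push_cast
        ring_nf

lemma summable_exp_neg_two_mul_pi_sq_mul {s : ℝ} (hs : 0 < s) :
    Summable fun k : ℤ => rexp (-2 * π ^ 2 * s * k ^ 2) :=
  (summable_exp_neg_mul_add_sq (by positivity : 0 < 2 * π ^ 2 * s) 0).congr fun k => by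
    simp only [add_zero]; ring_nf

lemma norm_cexp_two_pi_I_mul_intCast_mul_sub (k : ℤ) (y m : ℝ) :
    ‖cexp (2 * π * I * k * (y - m))‖ = 1 := by
  simp [Complex.norm_exp]

lemma norm_integral_cexp_two_pi_I_mul (a b m : ℝ) {k : ℤ} (hk : k ≠ 0) :
    ‖∫ y in a..b, cexp (2 * π * I * k * (y - m))‖ =
      ‖cexp (2 * π * I * b * k) - cexp (2 * π * I * a * k)‖ / (2 * π * |(k : ℝ)|) := by
  have hc : 2 * π * I * k ≠ 0 := by simp [hk, pi_ne_zero]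
  have hmode : ∀ y : ℝ, cexp (2 * π * I * k * (y - m)) =
      cexp (-(2 * π * I * k * m)) * cexp (2 * π * I * k * y) := fun y => by
    rw [← Complex.exp_add]; ring_nf
  simp_rw [hmode, intervalIntegral.integral_const_mul, integral_exp_mul_complex hc, norm_mul,
    norm_div]
  simp [Complex.norm_exp, abs_of_pos pi_pos]
  ring_nf

lemma gaussianReal_setOf_fract_mem_Icc (m : ℝ) {v : ℝ≥0} (hv : v ≠ 0) {a b : ℝ} (ha : 0 ≤ a)
    (hab : a ≤ b) (hb : b ≤ 1) :
    ((gaussianReal m v {x | Int.fract x ∈ Icc a b}).toReal : ℂ) =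
      ∑' k : ℤ, (rexp (-2 * π ^ 2 * v * k ^ 2) : ℂ) *
        ∫ y in a..b, cexp (2 * π * I * k * (y - m)) := by
  set P : ℝ → ℝ := fun y => ∑' n : ℤ, gaussianPDFReal m v (y + n)
  set F : ℤ → ℝ → ℂ := fun k y =>
    (rexp (-2 * π ^ 2 * v * k ^ 2) : ℂ) * cexp (2 * π * I * k * (y - m))
  have hP_meas : Measurable P :=
    Measurable.tsum fun n => (measurable_gaussianPDFReal m v).comp (measurable_add_const _)
  have hprob : (gaussianReal m v {x | Int.fract x ∈ Icc a b}).toReal = ∫ y in Ioc a b, P y := by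
    rw [gaussianReal_of_var_ne_zero m hv,
      withDensity_setOf_fract_mem_Icc (measurable_gaussianPDF m v) ha hb,
      integral_eq_lintegral_of_nonneg_ae
        (ae_of_all _ fun y => tsum_nonneg fun n => gaussianPDFReal_nonneg _ _ _)
        hP_meas.aestronglyMeasurable]
    exact congrArg _ <| lintegral_congr fun y => (ENNReal.ofReal_tsum_of_nonneg
      (fun n => gaussianPDFReal_nonneg _ _ _) (summable_gaussianPDFReal_add_intCast m hv y)).symm
  have hF_int : ∀ k, Integrable (F k) (volume.restrict (Ioc a b)) := fun k =>
    (by fun_prop : Continuous (F k)).integrableOn_Ioc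
  have hF_norm : ∀ k y, ‖F k y‖ = rexp (-2 * π ^ 2 * v * k ^ 2) := fun k y => by
    rw [norm_mul, norm_cexp_two_pi_I_mul_intCast_mul_sub, mul_one, Complex.norm_real,
      norm_of_nonneg (exp_pos _).le]
  have hF_sum : Summable fun k => ∫ y in Ioc a b, ‖F k y‖ := by
    refine ((summable_exp_neg_two_mul_pi_sq_mul (s := v) (by positivity)).mul_right (b - a)).congr
      fun k => ?_
    simp [hF_norm, hab, mul_comm]
  calc ((gaussianReal m v {x | Int.fract x ∈ Icc a b}).toReal : ℂ)
      = ∫ y in Ioc a b, (P y : ℂ) := by rw [hprob]; exact integral_ofReal.symm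
    _ = ∫ y in Ioc a b, ∑' k, F k y :=
        integral_congr_ae (ae_of_all _ fun y => tsum_gaussianPDFReal_add_intCast m hv y)
    _ = ∑' k, ∫ y in Ioc a b, F k y := (integral_tsum_of_summable_integral_norm hF_int hF_sum).symm
    _ = _ := tsum_congr fun k => by rw [integral_const_mul, intervalIntegral.integral_of_le hab]

theorem abs_gaussianReal_setOf_fract_mem_Icc_sub_le (m : ℝ) {v : ℝ≥0} (hv : v ≠ 0) {a b : ℝ}
    (ha : 0 ≤ a) (hab : a ≤ b) (hb : b ≤ 1) :
    |(gaussianReal m v {x | Int.fract x ∈ Icc a b}).toReal - (b - a)| ≤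
      ∑' k : {k : ℤ // k ≠ 0}, rexp (-2 * π ^ 2 * v * (k : ℝ) ^ 2) *
        ‖cexp (2 * π * I * b * (k : ℤ)) - cexp (2 * π * I * a * (k : ℤ))‖ /
          (2 * π * |(k : ℝ)|) := by
  set F : ℤ → ℂ := fun k =>
    (rexp (-2 * π ^ 2 * v * k ^ 2) : ℂ) * ∫ y in a..b, cexp (2 * π * I * k * (y - m))
  have hF_norm_le : ∀ k, ‖F k‖ ≤ rexp (-2 * π ^ 2 * v * k ^ 2) * |b - a| := fun k => by
    rw [norm_mul, Complex.norm_real, norm_of_nonneg (exp_pos _).le]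
    gcongr
    simpa using intervalIntegral.norm_integral_le_of_norm_le_const
      fun y _ => (norm_cexp_two_pi_I_mul_intCast_mul_sub k y m).le
  have hF_summable : Summable fun k => ‖F k‖ :=
    .of_nonneg_of_le (fun k => norm_nonneg _) hF_norm_le
      ((summable_exp_neg_two_mul_pi_sq_mul (s := v) (by positivity)).mul_right _)
  have hF_zero : F 0 = (b - a : ℝ) := by simp [F]
  have hF_split : ∑' k, F k = (b - a : ℝ) + ∑' k : {k : ℤ // k ≠ 0}, F k := by
    rw [← hF_summable.of_norm.tsum_subtype_add_tsum_subtype_compl {0}, tsum_singleton, hF_zero]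
    rfl
  have hdiff : (((gaussianReal m v {x | Int.fract x ∈ Icc a b}).toReal - (b - a) : ℝ) : ℂ) =
      ∑' k : {k : ℤ // k ≠ 0}, F k := by
    rw [Complex.ofReal_sub, gaussianReal_setOf_fract_mem_Icc m hv ha hab hb, hF_split,
      add_sub_cancel_left]
  calc |(gaussianReal m v {x | Int.fract x ∈ Icc a b}).toReal - (b - a)|
      = ‖∑' k : {k : ℤ // k ≠ 0}, F k‖ := by rw [← hdiff, Complex.norm_real, norm_eq_abs]
    _ ≤ ∑' k : {k : ℤ // k ≠ 0}, ‖F k‖ := norm_tsum_le_tsum_norm (hF_summable.subtype _)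
    _ = _ := tsum_congr fun k => by
      rw [norm_mul, Complex.norm_real, norm_of_nonneg (exp_pos _).le,
        norm_integral_cexp_two_pi_I_mul a b m k.2, mul_div_assoc]

lemma tendsto_tsum_exp_neg_two_mul_pi_sq_mul_sq_atTop {w : {k : ℤ // k ≠ 0} → ℝ} {C : ℝ}
    (hw : ∀ k, ‖w k‖ ≤ C) :
    Tendsto (fun σ : ℝ => ∑' k : {k : ℤ // k ≠ 0}, rexp (-2 * π ^ 2 * σ ^ 2 * (k : ℝ) ^ 2) * w k)
      atTop (𝓝 0) := by
  have hlim : ∀ k : {k : ℤ // k ≠ 0},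
      Tendsto (fun σ : ℝ => rexp (-2 * π ^ 2 * σ ^ 2 * (k : ℝ) ^ 2) * w k) atTop (𝓝 0) := by
    intro k
    have hk : (k : ℝ) ≠ 0 := Int.cast_ne_zero.2 k.2
    have hexponent : Tendsto (fun σ : ℝ => -2 * π ^ 2 * σ ^ 2 * (k : ℝ) ^ 2) atTop atBot :=
      ((tendsto_pow_atTop two_ne_zero).const_mul_atTop_of_neg (by simp [pi_pos])).atBot_mul_const
        (by positivity)
    simpa using (tendsto_exp_atBot.comp hexponent).mul_const (w k)
  have hbound : ∀ᶠ σ : ℝ in atTop, ∀ k : {k : ℤ // k ≠ 0},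
      ‖rexp (-2 * π ^ 2 * σ ^ 2 * (k : ℝ) ^ 2) * w k‖ ≤
        rexp (-2 * π ^ 2 * 1 * (k : ℝ) ^ 2) * C := by
    filter_upwards [eventually_ge_atTop 1] with σ hσ k
    rw [norm_mul, norm_of_nonneg (exp_pos _).le]
    refine mul_le_mul (exp_le_exp.2 ?_) (hw k) (norm_nonneg _) (exp_pos _).le
    have hσ2 : 1 ≤ σ ^ 2 := one_le_pow₀ hσ
    nlinarith [mul_nonneg (sub_nonneg.2 hσ2) (by positivity : 0 ≤ π ^ 2 * (k : ℝ) ^ 2)]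
  simpa using tendsto_tsum_of_dominated_convergence
    (((summable_exp_neg_two_mul_pi_sq_mul one_pos).subtype _).mul_right C) hlim hbound

lemma norm_cexp_sub_cexp_div_le_two (a b : ℝ) {k : ℤ} (hk : k ≠ 0) :
    ‖cexp (2 * π * I * b * k) - cexp (2 * π * I * a * k)‖ / (2 * π * |(k : ℝ)|) ≤ 2 := by
  have hk1 : (1 : ℝ) ≤ |(k : ℝ)| := by exact_mod_cast Int.one_le_abs hk
  have hden : 1 ≤ 2 * π * |(k : ℝ)| := by nlinarith [pi_gt_three]
  refine (div_le_self (norm_nonneg _) hden).trans ((norm_sub_le _ _).trans ?_)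
  simp [Complex.norm_exp]
  norm_num

/-- For a Gaussian random variable `X` with mean `m` and variance `σ²`, and any
`[a,b] ⊆ [0,1]`:
`|P(X mod 1 ∈ [a,b]) - (b-a)| ≤ ∑_{k ≠ 0} e^{-2π²σ²k²} |e^{2πibk} - e^{2πiak}|/(2π|k|)`;
in particular `P(X mod 1 ∈ [a,b]) → b - a` as `σ → ∞`, uniformly in the mean `m`. -/
theorem gaussian_mod_one_error_bound (a b : ℝ) (ha : 0 ≤ a) (hab : a ≤ b) (hb : b ≤ 1) :
    (∀ (m σ : ℝ), 0 < σ →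
      |((gaussianReal m (Real.toNNReal (σ ^ 2))) {x : ℝ | Int.fract x ∈ Set.Icc a b}).toReal
          - (b - a)| ≤
        ∑' k : {k : ℤ // k ≠ 0},
          Real.exp (-2 * π ^ 2 * σ ^ 2 * ((k : ℤ) : ℝ) ^ 2) *
            ‖Complex.exp (2 * π * Complex.I * b * ((k : ℤ) : ℂ)) -
              Complex.exp (2 * π * Complex.I * a * ((k : ℤ) : ℂ))‖ /
            (2 * π * |((k : ℤ) : ℝ)|)) ∧
    (∀ ε : ℝ, 0 < ε → ∃ σ₀ : ℝ, ∀ σ : ℝ, σ₀ ≤ σ → 0 < σ → ∀ m : ℝ,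
      |((gaussianReal m (Real.toNNReal (σ ^ 2))) {x : ℝ | Int.fract x ∈ Set.Icc a b}).toReal
          - (b - a)| ≤ ε) := by
  have hbound : ∀ m σ : ℝ, 0 < σ →
      |(gaussianReal m (σ ^ 2).toNNReal {x | Int.fract x ∈ Icc a b}).toReal - (b - a)| ≤
        ∑' k : {k : ℤ // k ≠ 0}, rexp (-2 * π ^ 2 * σ ^ 2 * (k : ℝ) ^ 2) *
          ‖cexp (2 * π * I * b * (k : ℤ)) - cexp (2 * π * I * a * (k : ℤ))‖ /
            (2 * π * |(k : ℝ)|) := fun m σ hσ => by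
    have h := abs_gaussianReal_setOf_fract_mem_Icc_sub_le m (v := (σ ^ 2).toNNReal)
      (by simpa using hσ.ne') ha hab hb
    rwa [Real.coe_toNNReal _ (sq_nonneg σ)] at h
  refine ⟨hbound, fun ε hε => ?_⟩
  have hlim := tendsto_tsum_exp_neg_two_mul_pi_sq_mul_sq_atTop fun k : {k : ℤ // k ≠ 0} =>
    (norm_of_nonneg (by positivity)).trans_le (norm_cexp_sub_cexp_div_le_two a b k.2)
  obtain ⟨σ₀, hσ₀⟩ := eventually_atTop.1 (hlim.eventually_le_const hε)
  exact ⟨σ₀, fun σ hσ hσ_pos m =>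
    (hbound m σ hσ_pos).trans (by simpa only [mul_div_assoc] using hσ₀ σ hσ)⟩
end

section
/- Let S_m be a sum of m i.i.d. geometric(1/2) random variables and let n ≥ 1 be an integer. Then for each j ∈ {0, 1, …, n−1}, P((S_m − 2m)·(1/n) mod 1 = j/n) → 1/n as m → ∞; i.e. the fractional part of (S_m − 2m)/n is asymptotically uniform on {0, 1/n, …, (n−1)/n}. -/
/-! Reduce modulo `n`: the event is `S_m ≡ j + 2m (mod n)`, and `S_m mod n` is a random walk on
`ZMod n` whose step puts mass at least `2⁻ⁿ` on every residue, since each residue has a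
representative in `[1, n]`. Such a uniform lower bound makes convolution with the step law a
contraction by the factor `1 - n 2⁻ⁿ` in the sup distance to the uniform law `1/n`, so the law of
`S_m mod n` converges to uniform geometrically fast. -/

open MeasureTheory ProbabilityTheory Filter

section Contraction

variable {G : Type*} [AddCommGroup G] [Fintype G]

theorem abs_sum_mul_sub_inv_card_le {p q : G → ℝ} {δ ε : ℝ}
    (hp : ∑ s, p s = 1) (hq : ∑ s, q s = 1) (hqδ : ∀ s, δ ≤ q s)
    (hpε : ∀ s, |p s - (Fintype.card G : ℝ)⁻¹| ≤ ε) (r : G) :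
    |∑ s, p s * q (r - s) - (Fintype.card G : ℝ)⁻¹| ≤ (1 - Fintype.card G * δ) * ε := by
  set N : ℝ := (Fintype.card G : ℝ)
  have hN : N ≠ 0 := by positivity
  have hq_shift : ∑ s, q (r - s) = 1 := ((Equiv.subLeft r).sum_comp q).trans hq
  have hp_centered : ∑ s, (p s - N⁻¹) = 0 := by
    simp [Finset.sum_sub_distrib, hp, N, hN]
  -- Because `p - N⁻¹` has total mass zero, the constant `δ` can be removed from `q`.
  have hcentered : ∑ s, p s * q (r - s) - N⁻¹ = ∑ s, (p s - N⁻¹) * (q (r - s) - δ) := by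
    have : ∑ s, (p s - N⁻¹) * (q (r - s) - δ)
        = ∑ s, p s * q (r - s) - N⁻¹ * ∑ s, q (r - s) - δ * ∑ s, (p s - N⁻¹) := by
      simp only [Finset.mul_sum, ← Finset.sum_sub_distrib]
      exact Finset.sum_congr rfl fun s _ => by ring
    rw [this, hq_shift, hp_centered]
    ring
  calc |∑ s, p s * q (r - s) - N⁻¹| = |∑ s, (p s - N⁻¹) * (q (r - s) - δ)| := by
        rw [hcentered]
    _ ≤ ∑ s, |p s - N⁻¹| * (q (r - s) - δ) := by
        refine (Finset.abs_sum_le_sum_abs _ _).trans (Finset.sum_le_sum fun s _ => ?_)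
        rw [abs_mul, abs_of_nonneg (sub_nonneg.2 (hqδ _))]
    _ ≤ ∑ s, ε * (q (r - s) - δ) :=
        Finset.sum_le_sum fun s _ => mul_le_mul_of_nonneg_right (hpε s) (sub_nonneg.2 (hqδ _))
    _ = (1 - N * δ) * ε := by
        rw [← Finset.mul_sum, Finset.sum_sub_distrib, hq_shift]
        simp [N]
        ring

variable {p q : ℕ → G → ℝ} {δ : ℝ}

theorem abs_sub_inv_card_le_pow (hp : ∀ m, ∑ s, p m s = 1) (hp₀ : ∀ s, 0 ≤ p 0 s)
    (hq : ∀ m, ∑ s, q m s = 1) (hqδ : ∀ m s, δ ≤ q m s)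
    (hrec : ∀ m r, p (m + 1) r = ∑ s, p m s * q m (r - s)) (m : ℕ) (r : G) :
    |p m r - (Fintype.card G : ℝ)⁻¹| ≤ (1 - Fintype.card G * δ) ^ m := by
  induction m generalizing r with
  | zero =>
    have hle : p 0 r ≤ 1 := hp 0 ▸ Finset.single_le_sum (fun s _ => hp₀ s) (Finset.mem_univ r)
    have hinv : (Fintype.card G : ℝ)⁻¹ ≤ 1 :=
      inv_le_one_of_one_le₀ (by exact_mod_cast Fintype.card_pos)
    rw [pow_zero, abs_le]
    constructor <;> linarith [hp₀ r, (by positivity : (0 : ℝ) < (Fintype.card G : ℝ)⁻¹)]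
  | succ m ih =>
    rw [hrec, pow_succ, mul_comm]
    exact abs_sum_mul_sub_inv_card_le (hp m) (hq m) (hqδ m) ih r

theorem tendsto_apply_inv_card_of_eq_sum_mul (hδ : 0 < δ) (hp : ∀ m, ∑ s, p m s = 1)
    (hp₀ : ∀ s, 0 ≤ p 0 s) (hq : ∀ m, ∑ s, q m s = 1) (hqδ : ∀ m s, δ ≤ q m s)
    (hrec : ∀ m r, p (m + 1) r = ∑ s, p m s * q m (r - s)) (r : ℕ → G) :
    Tendsto (fun m => p m (r m)) atTop (nhds (Fintype.card G : ℝ)⁻¹) := by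
  have hmass : Fintype.card G * δ ≤ 1 := by
    simpa [hq 0] using Finset.sum_le_sum fun s (_ : s ∈ Finset.univ) => hqδ 0 s
  have hpos : 0 < Fintype.card G * δ := by positivity
  rw [tendsto_iff_dist_tendsto_zero]
  exact squeeze_zero (fun _ => dist_nonneg)
    (fun m => abs_sub_inv_card_le_pow hp hp₀ hq hqδ hrec m (r m))
    (tendsto_pow_atTop_nhds_zero_of_lt_one (by linarith) (by linarith))

end Contraction

section Law

variable {Ω G : Type*} [MeasurableSpace Ω] {μ : Measure Ω} [MeasurableSpace G]
  [MeasurableSingletonClass G] [Fintype G]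

theorem sum_measureReal_eq_one [IsProbabilityMeasure μ] {X : Ω → G} (hX : Measurable X) :
    ∑ s, μ.real {ω | X ω = s} = 1 := by
  rw [← probReal_univ (μ := μ), ← Set.preimage_univ (f := X), ← Finset.coe_univ,
    ← sum_measureReal_preimage_singleton _ fun s _ => hX (measurableSet_singleton s)]
  rfl

theorem measureReal_add_eq_sum_mul [IsFiniteMeasure μ] [AddCommGroup G] {X Y : Ω → G}
    (hX : Measurable X) (hY : Measurable Y) (hXY : IndepFun X Y μ) (r : G) :
    μ.real {ω | X ω + Y ω = r} = ∑ s, μ.real {ω | X ω = s} * μ.real {ω | Y ω = r - s} := by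
  have hunion : {ω | X ω + Y ω = r} = ⋃ s ∈ Finset.univ, X ⁻¹' {s} ∩ Y ⁻¹' {r - s} := by
    ext ω
    simp [eq_sub_iff_add_eq']
  have hdisj : Set.PairwiseDisjoint ↑(Finset.univ : Finset G)
      fun s => X ⁻¹' {s} ∩ Y ⁻¹' {r - s} :=
    fun s _ t _ hst => Set.disjoint_left.2 fun ω hs ht => hst (hs.1.symm.trans ht.1)
  rw [hunion, measureReal_biUnion_finset hdisj
    fun s _ => (hX (measurableSet_singleton _)).inter (hY (measurableSet_singleton _))]
  refine Finset.sum_congr rfl fun s _ => ?_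
  simp only [measureReal_def, ← ENNReal.toReal_mul]
  rw [hXY.measure_inter_preimage_eq_mul _ _ (measurableSet_singleton _)
    (measurableSet_singleton _)]
  rfl

end Law

theorem Int.fract_intCast_sub_div_natCast_eq_iff {k : Type*} [Field k] [LinearOrder k]
    [IsOrderedRing k] [FloorRing k] (a b : ℤ) {n j : ℕ} (hj : j < n) :
    Int.fract (((a : k) - b) / n) = j / n ↔ (a : ZMod n) = j + b := by
  have hn : (n : k) ≠ 0 := by exact_mod_cast (Nat.zero_lt_of_lt hj).ne'
  have hjmod : (j : ℤ) % n = j := Int.emod_eq_of_lt (by positivity) (by exact_mod_cast hj)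
  rw [← Int.cast_sub, Int.fract_div_intCast_eq_div_intCast_mod, div_left_inj' hn,
    ← sub_eq_iff_eq_add, ← Int.cast_natCast (R := ZMod n) j, ← Int.cast_sub,
    ZMod.intCast_eq_intCast_iff', hjmod]
  norm_cast

theorem inv_two_pow_le_measureReal_natCast_eq {Ω : Type*} [MeasurableSpace Ω] {μ : Measure Ω}
    [IsFiniteMeasure μ] {X : Ω → ℕ}
    (hX : ∀ k : ℕ, 1 ≤ k → μ {ω | X ω = k} = ENNReal.ofReal ((1 : ℝ) / 2 ^ k))
    (n : ℕ) [NeZero n] (s : ZMod n) :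
    (1 : ℝ) / 2 ^ n ≤ μ.real {ω | (X ω : ZMod n) = s} := by
  -- the representative of `s` in `[1, n]`
  set k := (s - 1).val + 1
  have hks : (k : ZMod n) = s := by simp [k]
  have hkn : k ≤ n := (s - 1).val_lt
  calc (1 : ℝ) / 2 ^ n ≤ 1 / 2 ^ k := by gcongr; norm_num
    _ = μ.real {ω | X ω = k} := by
        rw [measureReal_def, hX k (Nat.le_add_left 1 _), ENNReal.toReal_ofReal (by positivity)]
    _ ≤ μ.real {ω | (X ω : ZMod n) = s} :=
        measureReal_mono fun ω (hω : X ω = k) => by simp [hω, hks]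

theorem geometric_sum_mod_one_uniform_on_lattice_general
    {Ω : Type*} [MeasurableSpace Ω] (μ : Measure Ω)
    [IsProbabilityMeasure μ] (ξ : ℕ → Ω → ℕ) (hmeas : ∀ i, Measurable (ξ i))
    (hindep : ProbabilityTheory.iIndepFun ξ μ)
    (hdist : ∀ i, ∀ k : ℕ, 1 ≤ k → μ {ω | ξ i ω = k} = ENNReal.ofReal ((1 : ℝ) / 2 ^ k))
    (n : ℕ) (j : ℕ) (hj : j < n) :
    Filter.Tendsto
      (fun m : ℕ => (μ {ω | Int.fract
        (((∑ i ∈ Finset.range m, (ξ i ω : ℝ)) - 2 * m) / n) = (j : ℝ) / n}).toReal)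
      Filter.atTop (nhds (1 / (n : ℝ))) := by
  have : NeZero n := ⟨(Nat.zero_lt_of_lt hj).ne'⟩
  set η : ℕ → Ω → ZMod n := fun i ω => (ξ i ω : ZMod n)
  have hη : ∀ i, Measurable (η i) := fun i => measurable_from_top.comp (hmeas i)
  have hS : ∀ m, Measurable fun ω => ∑ i ∈ Finset.range m, η i ω := fun m =>
    Finset.measurable_sum _ fun i _ => hη i
  have hevent : ∀ m : ℕ,
      {ω | Int.fract (((∑ i ∈ Finset.range m, (ξ i ω : ℝ)) - 2 * m) / n) = j / n}
        = {ω | ∑ i ∈ Finset.range m, η i ω = j + 2 * m} := by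
    intro m
    ext ω
    have := Int.fract_intCast_sub_div_natCast_eq_iff (k := ℝ) (∑ i ∈ Finset.range m, ξ i ω)
      (2 * m) hj
    push_cast at this
    exact this
  simp only [hevent, one_div]
  rw [show (n : ℝ)⁻¹ = (Fintype.card (ZMod n) : ℝ)⁻¹ by rw [ZMod.card]]
  refine tendsto_apply_inv_card_of_eq_sum_mul (δ := 1 / 2 ^ n)
    (p := fun m r => μ.real {ω | ∑ i ∈ Finset.range m, η i ω = r})
    (q := fun m s => μ.real {ω | η m ω = s}) (by positivity)
    (fun m => sum_measureReal_eq_one (hS m)) (fun _ => measureReal_nonneg)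
    (fun m => sum_measureReal_eq_one (hη m))
    (fun m => inv_two_pow_le_measureReal_natCast_eq (hdist m) n) (fun m r => ?_) _
  have hindep_step : IndepFun (fun ω => ∑ i ∈ Finset.range m, η i ω) (η m) μ := by
    rw [← Finset.sum_fn]
    exact (hindep.comp (fun _ k => (k : ZMod n)) fun _ => .of_discrete).indepFun_sum_range_succ
      hη m
  simp only [Finset.sum_range_succ]
  exact measureReal_add_eq_sum_mul (hS m) (hη m) hindep_step r

/-- If `S_m` is a sum of `m` i.i.d. geometric(1/2) random variables and `n ≥ 1` is an
integer, then for each `j ∈ {0, …, n-1}`,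
`P((S_m - 2m)/n mod 1 = j/n) → 1/n` as `m → ∞`. -/
theorem geometric_sum_mod_one_uniform_on_lattice
    {Ω : Type*} [MeasurableSpace Ω] (μ : Measure Ω)
    [IsProbabilityMeasure μ] (ξ : ℕ → Ω → ℕ) (hmeas : ∀ i, Measurable (ξ i))
    (hindep : ProbabilityTheory.iIndepFun ξ μ)
    (hdist : ∀ i, ∀ k : ℕ, 1 ≤ k → μ {ω | ξ i ω = k} = ENNReal.ofReal ((1 : ℝ) / 2 ^ k))
    (n : ℕ) (hn : 1 ≤ n) (j : ℕ) (hj : j < n) :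
    Filter.Tendsto
      (fun m : ℕ => (μ {ω | Int.fract
        (((∑ i ∈ Finset.range m, (ξ i ω : ℝ)) - 2 * m) / n) = (j : ℝ) / n}).toReal)
      Filter.atTop (nhds (1 / (n : ℝ))) :=
  geometric_sum_mod_one_uniform_on_lattice_general μ ξ hmeas hindep hdist n j hj
end
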